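/- Let f : ℝ^d → T be a measurable function into a countable set T of transcriptions (with the discrete σ-algebra), let s ∈ T, let WER : T × T → ℝ be an arbitrary function, and let k ∈ ℝ. Fix x ∈ ℝ^d and p ∈ (1/2, 1), and suppose μ_x{z ∈ ℝ^d : WER(f(z), s) < k} ≥ p. Then for every δ ∈ ℝ^d with ‖δ‖₂ < R, where R = (σ/2)·(Φ⁻¹(p) − Φ⁻¹(1−p)), one has μ_{x+δ}{z ∈ ℝ^d : WER(f(z), s) < k} > 1/2. -/

import Mathlib

/-!
By the Neyman–Pearson lemma, among all sets of `μ_x`-mass at least `p`, the least `μ_{x+δ}`-mass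
is attained by a sublevel set of the likelihood ratio
`dμ_{x+δ}/dμ_x (z) = exp ((⟪δ, z - x⟫ - ‖δ‖² / 2) / σ²)`, i.e. by a half-space
`A = {z | ⟪δ, z - x⟫ < t}`. Projecting onto `δ` turns both Gaussians into one-dimensional ones:
with `t = σ ‖δ‖ Φ⁻¹(p)` one gets `μ_x(A) = p` and `μ_{x+δ}(A) = Φ(Φ⁻¹(p) - ‖δ‖ / σ)`, which exceeds
`Φ(0) = 1/2` exactly when `‖δ‖ < σ Φ⁻¹(p) = (σ/2)(Φ⁻¹(p) - Φ⁻¹(1 - p))`.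
-/

open MeasureTheory ProbabilityTheory
open scoped RealInnerProductSpace

/-- `Phi` : cumulative distribution function of the standard real Gaussian N(0,1). -/
noncomputable def Phi : ℝ → ℝ := fun t => ((gaussianReal 0 1) (Set.Iic t)).toReal

/-- `PhiInv` : the standard Gaussian quantile function, inverse of `Phi` on (0,1). -/
noncomputable def PhiInv : ℝ → ℝ := Function.invFun Phi

/-- `gaussPi d σ x` : the isotropic Gaussian measure on ℝ^d with mean `x` and covariance σ²I,
i.e. the product measure whose i-th factor is the real Gaussian with mean `x i`, variance σ². -/
noncomputable def gaussPi (d : ℕ) (σ : ℝ) (x : EuclideanSpace ℝ (Fin d)) :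
    Measure (EuclideanSpace ℝ (Fin d)) :=
  Measure.map (MeasurableEquiv.toLp 2 (Fin d → ℝ))
    (Measure.pi fun i => gaussianReal (x i) ⟨σ ^ 2, sq_nonneg σ⟩)

open Set
open scoped NNReal ENNReal

lemma continuous_cdf {μ : Measure ℝ} [IsProbabilityMeasure μ] [NullSingletonClass μ] :
    Continuous (cdf μ) := by
  refine continuous_iff_continuousAt.2 fun x => ?_
  rw [(monotone_cdf μ).continuousAt_iff_leftLim_eq_rightLim, StieltjesFunction.rightLim_eq]
  have h := (cdf μ).measure_singleton x
  rw [measure_cdf, measure_singleton, eq_comm, ENNReal.ofReal_eq_zero, sub_nonpos] at h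
  exact le_antisymm ((monotone_cdf μ).leftLim_le le_rfl) h

instance : NullSingletonClass (gaussianReal 0 1) := nullSingletonClass_gaussianReal one_ne_zero

lemma Phi_eq_cdf : Phi = cdf (gaussianReal 0 1) :=
  funext fun t => (cdf_eq_real _ t).symm

lemma Phi_eq_toReal_Iio (t : ℝ) : Phi t = (gaussianReal 0 1 (Iio t)).toReal := by
  rw [Phi, measure_congr Iio_ae_eq_Iic]

lemma Phi_strictMono : StrictMono Phi := by
  intro a b hab
  have hpos : gaussianReal 0 1 (Ioc a b) ≠ 0 := fun h =>
    hab.not_ge (by simpa using gaussianReal_absolutelyContinuous' 0 one_ne_zero h)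
  rw [← measure_cdf (gaussianReal 0 1), StieltjesFunction.measure_Ioc, ne_eq,
    ENNReal.ofReal_eq_zero, not_le, sub_pos] at hpos
  rwa [Phi_eq_cdf]

lemma Phi_neg (t : ℝ) : Phi (-t) = 1 - Phi t := by
  have hsymm : gaussianReal 0 1 (Iic (-t)) = gaussianReal 0 1 (Ici t) := by
    conv_lhs => rw [← neg_zero, ← gaussianReal_map_neg]
    rw [Measure.map_apply measurable_neg measurableSet_Iic]
    congr 1; ext y; simp
  rw [Phi, hsymm, ← compl_Iio, prob_compl_eq_one_sub measurableSet_Iio,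
    ENNReal.toReal_sub_of_le prob_le_one ENNReal.one_ne_top, ENNReal.toReal_one,
    Phi_eq_toReal_Iio]

lemma Phi_zero : Phi 0 = 1 / 2 := by
  linarith [neg_zero (G := ℝ) ▸ Phi_neg 0]

lemma mem_range_Phi {q : ℝ} (hq : q ∈ Ioo 0 1) : q ∈ range Phi := by
  rw [Phi_eq_cdf]
  exact mem_range_of_exists_le_of_exists_ge continuous_cdf
    ((tendsto_cdf_atBot _).eventually (eventually_le_nhds hq.1)).exists
    ((tendsto_cdf_atTop _).eventually (eventually_ge_nhds hq.2)).exists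

lemma Phi_PhiInv {q : ℝ} (hq : q ∈ Ioo 0 1) : Phi (PhiInv q) = q :=
  Function.invFun_eq (mem_range_Phi hq)

lemma PhiInv_Phi (t : ℝ) : PhiInv (Phi t) = t :=
  Function.leftInverse_invFun Phi_strictMono.injective t

lemma PhiInv_one_sub {q : ℝ} (hq : q ∈ Ioo 0 1) : PhiInv (1 - q) = -PhiInv q := by
  rw [← Phi_PhiInv hq, ← Phi_neg, PhiInv_Phi, Phi_PhiInv hq]

-- The variance `⟨σ ^ 2, _⟩` in `gaussPi` elaborates to a bare subtype term on which `rw` and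
-- `simp` fail; every later statement goes through this form instead.
lemma gaussPi_eq_map_pi (d : ℕ) (σ : ℝ) (m : EuclideanSpace ℝ (Fin d)) :
    gaussPi d σ m = (Measure.pi fun i => gaussianReal (m i) (‖σ‖₊ ^ 2)).map
      (MeasurableEquiv.toLp 2 (Fin d → ℝ)) := by
  have hv : (⟨σ ^ 2, sq_nonneg σ⟩ : ℝ≥0) = ‖σ‖₊ ^ 2 :=
    NNReal.eq (by simp [sq_abs] : ((‖σ‖₊ ^ 2 : ℝ≥0) : ℝ) = σ ^ 2).symm
  exact congrArg (fun v => (Measure.pi fun i => gaussianReal (m i) v).map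
    (MeasurableEquiv.toLp 2 (Fin d → ℝ))) hv

lemma gaussianReal_eq_map_std (m σ : ℝ) :
    gaussianReal m (‖σ‖₊ ^ 2) = (gaussianReal 0 1).map fun t => m + σ * t := by
  have hcomp : (fun t => m + σ * t) = (m + ·) ∘ (σ * ·) := rfl
  rw [hcomp, ← Measure.map_map (by fun_prop) (by fun_prop), gaussianReal_map_const_mul,
    gaussianReal_map_const_add]
  congr 1
  · simp
  · ext; simp

lemma gaussPi_eq_map_stdGaussian (d : ℕ) (σ : ℝ) (x : EuclideanSpace ℝ (Fin d)) :
    gaussPi d σ x = (stdGaussian _).map fun w => x + σ • w := by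
  rw [gaussPi_eq_map_pi, ← map_pi_eq_stdGaussian, Measure.map_map (by fun_prop) (by fun_prop)]
  simp_rw [gaussianReal_eq_map_std]
  rw [← Measure.pi_map_pi (fun i => by fun_prop), Measure.map_map (by fun_prop) (by fun_prop)]
  rfl

instance (d : ℕ) (σ : ℝ) (x : EuclideanSpace ℝ (Fin d)) :
    IsProbabilityMeasure (gaussPi d σ x) := by
  rw [gaussPi_eq_map_stdGaussian]
  exact Measure.isProbabilityMeasure_map (by fun_prop)

lemma stdGaussian_map_inner {E : Type*} [NormedAddCommGroup E] [InnerProductSpace ℝ E]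
    [FiniteDimensional ℝ E] [MeasurableSpace E] [BorelSpace E] (u : E) :
    (stdGaussian E).map (fun w => ⟪u, w⟫) = gaussianReal 0 (‖u‖₊ ^ 2) := by
  have h := IsGaussian.map_eq_gaussianReal (μ := stdGaussian E) (innerSL ℝ u)
  rw [integral_strongDual_stdGaussian, variance_dual_stdGaussian, innerSL_apply_norm] at h
  convert h using 2
  · ext; simp
  · ext; simp

lemma gaussianReal_Iio (σ : ℝ) (hσ : 0 < σ) (t : ℝ) :
    gaussianReal 0 (‖σ‖₊ ^ 2) (Iio t) = ENNReal.ofReal (Phi (t / σ)) := by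
  have hpre : (fun y => 0 + σ * y) ⁻¹' Iio t = Iio (t / σ) := by
    ext y; simp [lt_div_iff₀ hσ, mul_comm]
  rw [gaussianReal_eq_map_std, Measure.map_apply (by fun_prop) measurableSet_Iio, hpre,
    Phi_eq_toReal_Iio, ENNReal.ofReal_toReal (measure_ne_top _ _)]

lemma gaussPi_inner_sub_lt {d : ℕ} {σ : ℝ} (hσ : 0 < σ) (x : EuclideanSpace ℝ (Fin d))
    {δ : EuclideanSpace ℝ (Fin d)} (hδ : δ ≠ 0) (t : ℝ) :
    gaussPi d σ x {z | ⟪δ, z - x⟫ < t} = ENNReal.ofReal (Phi (t / (σ * ‖δ‖))) := by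
  have hpre : (fun w => x + σ • w) ⁻¹' {z | ⟪δ, z - x⟫ < t}
      = (fun w => ⟪δ, w⟫) ⁻¹' Iio (t / σ) := by
    ext w; simp [real_inner_smul_right, lt_div_iff₀ hσ, mul_comm]
  rw [gaussPi_eq_map_stdGaussian, Measure.map_apply (by fun_prop) (by measurability), hpre,
    ← Measure.map_apply (by fun_prop) measurableSet_Iio, stdGaussian_map_inner, ← nnnorm_norm,
    gaussianReal_Iio _ (norm_pos_iff.2 hδ), div_div]

lemma gaussianReal_add_eq_withDensity (m c : ℝ) {v : ℝ≥0} (hv : v ≠ 0) :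
    gaussianReal (m + c) v = (gaussianReal m v).withDensity
      fun y => ENNReal.ofReal (Real.exp ((c * (y - m) - c ^ 2 / 2) / v)) := by
  rw [gaussianReal_of_var_ne_zero _ hv, gaussianReal_of_var_ne_zero _ hv,
    ← withDensity_mul _ (measurable_gaussianPDF _ _) (by fun_prop)]
  congr 1
  ext y
  rw [Pi.mul_apply, gaussianPDF, gaussianPDF, ← ENNReal.ofReal_mul (gaussianPDFReal_nonneg _ _ _),
    gaussianPDFReal, gaussianPDFReal, mul_assoc _ (Real.exp _), ← Real.exp_add]
  congr 3
  have hv' : (v : ℝ) ≠ 0 := by exact_mod_cast hv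
  field_simp
  ring

lemma MeasureTheory.Measure.pi_withDensity {ι : Type*} [Fintype ι] {α : ι → Type*}
    [∀ i, MeasurableSpace (α i)] (μ : ∀ i, Measure (α i)) [∀ i, IsProbabilityMeasure (μ i)]
    {f : ∀ i, α i → ℝ≥0∞} (hf : ∀ i, Measurable (f i))
    [∀ i, SigmaFinite ((μ i).withDensity (f i))] :
    Measure.pi (fun i => (μ i).withDensity (f i))
      = (Measure.pi μ).withDensity fun x => ∏ i, f i (x i) := by
  refine Measure.pi_eq fun s hs => ?_
  have hind : (univ.pi s).indicator (fun x => ∏ i, f i (x i))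
      = fun x => ∏ i, (s i).indicator (f i) (x i) := by
    ext x
    by_cases hx : x ∈ univ.pi s
    · simp [hx, indicator_of_mem (hx _ (mem_univ _))]
    · obtain ⟨i, -, hi⟩ := not_forall₂.1 hx
      rw [indicator_of_notMem hx]
      exact (Finset.prod_eq_zero (Finset.mem_univ i) (indicator_of_notMem hi _)).symm
  have hmeas i : Measurable ((s i).indicator (f i)) := (hf i).indicator (hs i)
  rw [withDensity_apply _ (.univ_pi hs), ← lintegral_indicator (.univ_pi hs), hind,
    lintegral_prod_eq_prod_lintegral_of_indepFun _ _
      (iIndepFun_pi fun i => (hmeas i).aemeasurable)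
      fun i => (hmeas i).comp (measurable_pi_apply i)]
  refine Finset.prod_congr rfl fun i _ => ?_
  rw [(measurePreserving_eval μ i).lintegral_comp (hmeas i), lintegral_indicator (hs i),
    withDensity_apply _ (hs i)]

lemma sum_likelihoodRatio_exponent {d : ℕ} (σ : ℝ) (x δ z : EuclideanSpace ℝ (Fin d)) :
    ∑ i, (δ i * (z i - x i) - δ i ^ 2 / 2) / σ ^ 2 = (⟪δ, z - x⟫ - ‖δ‖ ^ 2 / 2) / σ ^ 2 := by
  rw [← Finset.sum_div, Finset.sum_sub_distrib, ← Finset.sum_div, EuclideanSpace.real_norm_sq_eq,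
    EuclideanSpace.inner_eq_star_dotProduct]
  simp [dotProduct, mul_comm]

lemma gaussPi_add_eq_withDensity {d : ℕ} {σ : ℝ} (hσ : σ ≠ 0) (x δ : EuclideanSpace ℝ (Fin d)) :
    gaussPi d σ (x + δ) = (gaussPi d σ x).withDensity
      fun z => ENNReal.ofReal (Real.exp ((⟪δ, z - x⟫ - ‖δ‖ ^ 2 / 2) / σ ^ 2)) := by
  have hv : ‖σ‖₊ ^ 2 ≠ 0 := by simpa using hσ
  simp_rw [gaussPi_eq_map_pi, PiLp.add_apply, gaussianReal_add_eq_withDensity _ _ hv]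
  rw [Measure.pi_withDensity _ fun i => by fun_prop]
  ext s hs
  rw [withDensity_apply _ hs, MeasurableEquiv.map_apply, withDensity_apply _ (by measurability),
    setLIntegral_map hs (by fun_prop) (by fun_prop)]
  refine setLIntegral_congr_fun (by measurability) fun w _ => ?_
  rw [← ENNReal.ofReal_prod_of_nonneg fun i _ => (Real.exp_pos _).le, ← Real.exp_sum]
  simp [sum_likelihoodRatio_exponent]

-- The Neyman–Pearson lemma.
lemma withDensity_apply_le_of_sublevel {α : Type*} [MeasurableSpace α] {μ : Measure α}
    [IsFiniteMeasure μ] {h : α → ℝ≥0∞} {L : ℝ≥0∞} {A B : Set α} (hA : MeasurableSet A)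
    (hB : MeasurableSet B) (hle : ∀ z ∈ A, h z ≤ L) (hge : ∀ z ∉ A, L ≤ h z) (hAB : μ A ≤ μ B) :
    μ.withDensity h A ≤ μ.withDensity h B := by
  have hdiff : μ (A \ B) ≤ μ (B \ A) := by
    rw [← measure_inter_add_sdiff A hB, ← measure_inter_add_sdiff B hA, inter_comm] at hAB
    exact (ENNReal.add_le_add_iff_left (measure_ne_top _ _)).1 hAB
  rw [← measure_inter_add_sdiff A hB, ← measure_inter_add_sdiff B hA, inter_comm B A]
  refine add_le_add le_rfl ?_
  calc μ.withDensity h (A \ B) ≤ ∫⁻ _ in A \ B, L ∂μ := by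
        rw [withDensity_apply _ (hA.diff hB)]
        exact setLIntegral_mono' (hA.diff hB) fun z hz => hle z hz.1
    _ = L * μ (A \ B) := setLIntegral_const _ _
    _ ≤ L * μ (B \ A) := by gcongr
    _ = ∫⁻ _ in B \ A, L ∂μ := (setLIntegral_const _ _).symm
    _ ≤ μ.withDensity h (B \ A) := by
        rw [withDensity_apply _ (hB.diff hA)]
        exact setLIntegral_mono' (hB.diff hA) fun z hz => hge z hz.2

lemma ofReal_Phi_sub_le_gaussPi_add {d : ℕ} {σ : ℝ} (hσ : 0 < σ) {x : EuclideanSpace ℝ (Fin d)}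
    {B : Set (EuclideanSpace ℝ (Fin d))} (hB : MeasurableSet B) {p : ℝ} (hp : p ∈ Ioo 0 1)
    (hpB : ENNReal.ofReal p ≤ gaussPi d σ x B) (δ : EuclideanSpace ℝ (Fin d)) :
    ENNReal.ofReal (Phi (PhiInv p - ‖δ‖ / σ)) ≤ gaussPi d σ (x + δ) B := by
  rcases eq_or_ne δ 0 with rfl | hδ
  · simpa [Phi_PhiInv hp] using hpB
  set t := σ * ‖δ‖ * PhiInv p
  set A := {z | ⟪δ, z - x⟫ < t}
  have hμA : gaussPi d σ x A = ENNReal.ofReal p := by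
    rw [gaussPi_inner_sub_lt hσ x hδ, mul_div_cancel_left₀ _ (by positivity), Phi_PhiInv hp]
  have hνA : gaussPi d σ (x + δ) A = ENNReal.ofReal (Phi (PhiInv p - ‖δ‖ / σ)) := by
    have hA : A = {z | ⟪δ, z - (x + δ)⟫ < t - ‖δ‖ ^ 2} := by
      ext z
      simp only [A, mem_ofPred_eq, sub_add_eq_sub_sub, inner_sub_right, real_inner_self_eq_norm_sq]
      constructor <;> intro h <;> linarith
    rw [hA, gaussPi_inner_sub_lt hσ _ hδ]
    congr 2
    simp only [t]
    field_simp
  rw [← hνA, gaussPi_add_eq_withDensity hσ.ne']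
  refine withDensity_apply_le_of_sublevel
    (L := ENNReal.ofReal (Real.exp ((t - ‖δ‖ ^ 2 / 2) / σ ^ 2)))
    (measurableSet_lt (by fun_prop) (by fun_prop)) hB (fun z hz => ?_) (fun z hz => ?_) (hμA ▸ hpB)
  · gcongr
    exact hz.le
  · gcongr
    exact not_lt.1 hz

/-- Randomized-smoothing robustness of the Word-Error-Rate for a Gaussian-smoothed ASR model
(main Proposition, Section 6.2): if with probability at least `p > 1/2` (under Gaussian noise
around `x`) the transcription has WER to the sentence `s` below `k`, then the same event keeps
probability `> 1/2` under Gaussian noise around `x + δ` whenever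
`‖δ‖₂ < R = (σ/2)(Φ⁻¹(p) - Φ⁻¹(1-p))`. -/
theorem wer_smoothing_certificate
    {d : ℕ} {σ : ℝ} (hσ : 0 < σ)
    {T : Type*} [Countable T] [MeasurableSpace T] [MeasurableSingletonClass T]
    (f : EuclideanSpace ℝ (Fin d) → T) (hf : Measurable f)
    (s : T) (WER : T × T → ℝ) (k : ℝ)
    (x : EuclideanSpace ℝ (Fin d)) (p : ℝ) (hp : p ∈ Set.Ioo (1 / 2 : ℝ) 1)
    (hpx : p ≤ (gaussPi d σ x {z | WER (f z, s) < k}).toReal) :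
    ∀ δ : EuclideanSpace ℝ (Fin d),
      ‖δ‖ < σ / 2 * (PhiInv p - PhiInv (1 - p)) →
      1 / 2 < (gaussPi d σ (x + δ) {z | WER (f z, s) < k}).toReal := by
  intro δ hδ
  have hp01 : p ∈ Ioo 0 1 := ⟨by linarith [hp.1], hp.2⟩
  rw [PhiInv_one_sub hp01] at hδ
  have hE : MeasurableSet {z | WER (f z, s) < k} := hf (.of_discrete (s := {t | WER (t, s) < k}))
  have hbound := ofReal_Phi_sub_le_gaussPi_add hσ hE hp01 (ENNReal.ofReal_le_of_le_toReal hpx) δ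
  calc 1 / 2 = Phi 0 := Phi_zero.symm
    _ < Phi (PhiInv p - ‖δ‖ / σ) := Phi_strictMono (by rw [sub_pos, div_lt_iff₀ hσ]; linarith)
    _ ≤ _ := (ENNReal.ofReal_le_iff_le_toReal (measure_ne_top _ _)).1 hbound
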